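/- arXiv:2201.06542 — 3 statements merged into one kernel-verified Lean document; each statement's English description precedes it below -/
import Mathlib

section
/- Let U and V be finite sets, let ρ and σ be probability measures on U and V respectively, and let λ be a coupling of ρ and σ on U × V. Then there exists another coupling λ̃ of ρ and σ which is absolutely continuous with respect to λ and such that the number of elements v ∈ V that are not λ̃-committed is at most |U| − 1. -/
open MeasureTheory
open scoped ENNReal

namespace Marriage

/-- `v` is `λ`-committed: there is at most one `u` such that `λ {(u, v)} > 0`. -/
def Committed {U V : Type*} [MeasurableSpace U] [MeasurableSpace V]
    (lam : Measure (U × V)) (v : V) : Prop :=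
  {u : U | lam {(u, v)} ≠ 0}.Subsingleton

end Marriage

/-!
Among the nonnegative matrices with the marginals of `λ` that vanish wherever `λ` does, take one,
`q`, with as few nonzero entries as possible, and let `S` be its support and `V_S` the columns
that `S` meets. If `|S| ≥ |U| + |V_S|`, the map sending a matrix supported on `S` to its row and
column sums has a nonzero kernel, because its image lies in the hyperplane where the row sums and
the column sums have the same total. Moving `q` along a kernel vector until an entry vanishes
then shrinks the support, which is impossible. So `|S| ≤ |U| + |V_S| - 1`; as every column of
`V_S` meets `S` at least once and every uncommitted column at least twice, at most `|U| - 1`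
columns are uncommitted.
-/

open Finset Matrix Module

theorem Matrix.rank_lt_card_height_of_vecMul_eq_zero {m n K : Type*} [Fintype m] [Fintype n]
    [Field K] (A : Matrix m n K) {c : m → K} (hc : c ≠ 0) (hcA : c ᵥ* A = 0) :
    A.rank < Fintype.card m := by
  have hker : LinearMap.ker Aᵀ.mulVecLin ≠ ⊥ :=
    (Submodule.ne_bot_iff _).2 ⟨c, by simpa [Matrix.mulVec_transpose] using hcA, hc⟩
  have hpos := mt Submodule.finrank_eq_zero.1 hker
  have := Aᵀ.mulVecLin.finrank_range_add_finrank_ker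
  rw [finrank_fintype_fun_eq_card] at this
  rw [← A.rank_transpose, Matrix.rank]
  omega

theorem Matrix.exists_mulVec_eq_zero_of_vecMul_eq_zero {m n K : Type*} [Fintype m] [Fintype n]
    [Field K] (A : Matrix m n K) {c : m → K} (hc : c ≠ 0) (hcA : c ᵥ* A = 0)
    (hmn : Fintype.card m ≤ Fintype.card n) : ∃ w ≠ 0, A *ᵥ w = 0 := by
  have hrank := A.rank_lt_card_height_of_vecMul_eq_zero hc hcA
  have hker : LinearMap.ker A.mulVecLin.rangeRestrict ≠ ⊥ :=
    LinearMap.ker_ne_bot_of_finrank_lt <| by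
      rw [finrank_fintype_fun_eq_card]
      exact hrank.trans_le hmn
  obtain ⟨w, hw, hw0⟩ := Submodule.exists_mem_ne_zero_of_ne_bot hker
  exact ⟨w, hw0, by simpa using hw⟩

theorem exists_ne_zero_supported_marginals_eq_zero {U V K : Type*} [Fintype U] [Fintype V]
    [DecidableEq U] [DecidableEq V] [Nonempty U] [Field K] (S : Finset (U × V))
    (hS : Fintype.card U + #(S.image Prod.snd) ≤ #S) :
    ∃ w : U × V → K, w ≠ 0 ∧ (∀ x ∉ S, w x = 0) ∧
      (∀ u, ∑ v, w (u, v) = 0) ∧ ∀ v, ∑ u, w (u, v) = 0 := by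
  set T := S.image Prod.snd
  -- the incidence matrix of `S` as a bipartite graph on `U ⊕ T`: every column has one `1` in
  -- each block, so `(1, -1)` is a left null vector
  let A : Matrix (U ⊕ T) S K := Matrix.of fun i s =>
    Sum.elim (fun u : U => if (s : U × V).1 = u then 1 else 0)
      (fun t : T => if (s : U × V).2 = t then 1 else 0) i
  have hc : (Sum.elim 1 (-1) : U ⊕ T → K) ≠ 0 := fun h => by
    simpa using congrFun h (Sum.inl (Classical.arbitrary U))
  have hcA : Sum.elim 1 (-1) ᵥ* A = 0 := by
    ext s
    have hs : (s : U × V).2 ∈ T := mem_image_of_mem _ s.2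
    simp only [A, vecMul, dotProduct, Fintype.sum_sum_type, of_apply, Sum.elim_inl, Sum.elim_inr,
      Pi.one_apply, Pi.neg_apply, one_mul, neg_one_mul, sum_ite_eq, mem_univ, if_true,
      Pi.zero_apply, sum_neg_distrib]
    rw [sum_coe_sort T fun v => if (s : U × V).2 = v then (1 : K) else 0, sum_ite_eq, if_pos hs,
      add_neg_cancel]
  obtain ⟨w, hw0, hAw⟩ := A.exists_mulVec_eq_zero_of_vecMul_eq_zero hc hcA
    (by rwa [Fintype.card_sum, Fintype.card_coe, Fintype.card_coe])
  let W : U × V → K := fun x => if h : x ∈ S then w ⟨x, h⟩ else 0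
  have hW : ∀ F : U × V → K, ∑ x, F x * W x = ∑ s : S, F s * w s := by
    intro F
    rw [← sum_subset (subset_univ S) fun x _ hx => by simp [W, hx], ← sum_coe_sort S]
    simp [W]
  refine ⟨W, fun h => hw0 (funext fun s => by simpa [W] using congrFun h s),
    fun x hx => by simp [W, hx], fun u => ?_, fun v => ?_⟩
  · calc ∑ v, W (u, v) = ∑ x, (if x.1 = u then 1 else 0) * W x := by
          rw [Fintype.sum_prod_type]; simp [ite_mul]
      _ = (A *ᵥ w) (Sum.inl u) := hW _
      _ = 0 := by rw [hAw]; rfl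
  · by_cases hv : v ∈ T
    · calc ∑ u, W (u, v) = ∑ x, (if x.2 = v then 1 else 0) * W x := by
            rw [Fintype.sum_prod_type_right]; simp [ite_mul]
        _ = (A *ᵥ w) (Sum.inr ⟨v, hv⟩) := hW _
        _ = 0 := by rw [hAw]; rfl
    · exact sum_eq_zero fun u _ => dif_neg fun h => hv (mem_image_of_mem _ h)

theorem exists_nonneg_add_smul_support_ssubset {ι K : Type*} [Fintype ι] [Field K] [LinearOrder K]
    [IsStrictOrderedRing K] {q w : ι → K} (hq : 0 ≤ q) (hw : ∀ i, q i = 0 → w i = 0)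
    (hneg : ∃ i, w i < 0) :
    ∃ t : K, 0 ≤ q + t • w ∧
      ({i | (q + t • w) i ≠ 0} : Finset ι) ⊂ ({i | q i ≠ 0} : Finset ι) := by
  obtain ⟨i₀, hi₀, hmin⟩ := exists_min_image {i | w i < 0} (fun i => q i / -w i)
    (by simpa [Finset.Nonempty] using hneg)
  replace hi₀ : w i₀ < 0 := by simpa using hi₀
  set t := q i₀ / -w i₀
  have ht : 0 ≤ t := div_nonneg (hq i₀) (neg_nonneg.2 hi₀.le)
  refine ⟨t, fun i => ?_, ?_⟩
  · rcases lt_or_ge (w i) 0 with hwi | hwi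
    · have := hmin i (by simpa using hwi)
      rw [le_div_iff₀ (neg_pos.2 hwi)] at this
      simp only [Pi.zero_apply, Pi.add_apply, Pi.smul_apply, smul_eq_mul]
      linarith
    · exact add_nonneg (hq i) (mul_nonneg ht hwi)
  · rw [ssubset_iff_of_subset fun i => by
      simp only [mem_filter, mem_univ, true_and, Pi.add_apply, Pi.smul_apply, smul_eq_mul]
      intro h; contrapose! h; simp [h, hw i h]]
    refine ⟨i₀, by simpa using fun h => hi₀.ne (hw i₀ h), ?_⟩
    simp only [mem_filter, mem_univ, true_and, Pi.add_apply, Pi.smul_apply, smul_eq_mul, not_not, t]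
    field_simp [hi₀.ne]
    ring

def IsDominatedCoupling {U V K : Type*} [Fintype U] [Fintype V] [AddCommMonoid K] [LE K]
    (p q : U × V → K) : Prop :=
  0 ≤ q ∧ (∀ x, p x = 0 → q x = 0) ∧ (∀ u, ∑ v, q (u, v) = ∑ v, p (u, v)) ∧
    ∀ v, ∑ u, q (u, v) = ∑ u, p (u, v)

theorem exists_isDominatedCoupling_card_support_lt {U V K : Type*} [Fintype U] [Fintype V]
    [DecidableEq V] [Nonempty U] [Field K] [LinearOrder K] [IsStrictOrderedRing K]
    {p : U × V → K} (hp : 0 ≤ p) :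
    ∃ q, IsDominatedCoupling p q ∧
      #{x | q x ≠ 0} < Fintype.card U + #(({x | q x ≠ 0} : Finset (U × V)).image Prod.snd) := by
  classical
  obtain ⟨q, hq, hmin⟩ := (measure fun q : U × V → K => #{x | q x ≠ 0}).wf.has_min
    {q | IsDominatedCoupling p q} ⟨p, hp, fun _ h => h, fun _ => rfl, fun _ => rfl⟩
  obtain ⟨hq0, hqp, hrow, hcol⟩ := hq
  refine ⟨q, ⟨hq0, hqp, hrow, hcol⟩, ?_⟩
  by_contra! hcard
  obtain ⟨w, hw0, hwS, hwrow, hwcol⟩ :=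
    exists_ne_zero_supported_marginals_eq_zero (K := K) _ hcard
  have hneg : ∃ x, w x < 0 := by
    by_contra! hw
    exact hw0 ((Fintype.sum_eq_zero_iff_of_nonneg hw).1 (by simp [Fintype.sum_prod_type, hwrow]))
  obtain ⟨t, ht0, hsub⟩ := exists_nonneg_add_smul_support_ssubset hq0
    (fun x hx => hwS x (by simp [hx])) hneg
  refine hmin (q + t • w) ⟨ht0, fun x hx => ?_, fun u => ?_, fun v => ?_⟩
    (card_lt_card hsub)
  · simp [hqp x hx, hwS x (by simp [hqp x hx])]
  · simp [sum_add_distrib, ← mul_sum, hwrow, hrow]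
  · simp [sum_add_distrib, ← mul_sum, hwcol, hcol]

theorem Finset.card_filter_one_lt_card_fiber_add_card_image_le {α β : Type*} [DecidableEq β]
    (s : Finset α) (f : α → β) :
    #{b ∈ s.image f | 1 < #{a ∈ s | f a = b}} + #(s.image f) ≤ #s := by
  rw [card_filter, card_eq_sum_card_image f s]
  calc _ = ∑ b ∈ s.image f, ((if 1 < #{a ∈ s | f a = b} then 1 else 0) + 1) := by
        rw [sum_add_distrib, sum_const, smul_eq_mul, mul_one]
    _ ≤ _ := sum_le_sum fun b hb => by
        obtain ⟨a, ha, rfl⟩ := mem_image.1 hb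
        have : 0 < #{a' ∈ s | f a' = f a} := card_pos.2 ⟨a, mem_filter.2 ⟨ha, rfl⟩⟩
        split_ifs <;> omega

theorem Finset.ncard_not_subsingleton_fiber_add_card_image_le {α β : Type*} [DecidableEq β]
    (s : Finset (α × β)) :
    {b | ¬ {a | (a, b) ∈ s}.Subsingleton}.ncard + #(s.image Prod.snd) ≤ #s := by
  have : {b | ¬ {a | (a, b) ∈ s}.Subsingleton} =
      ↑{b ∈ s.image Prod.snd | 1 < #{x ∈ s | x.2 = b}} := by
    ext b
    rw [Set.mem_ofPred_eq, coe_filter, Set.mem_ofPred_eq, Set.not_subsingleton_iff,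
      one_lt_card]
    constructor
    · rintro ⟨a₁, h₁, a₂, h₂, hne⟩
      exact ⟨mem_image_of_mem _ h₁, _, mem_filter.2 ⟨h₁, rfl⟩, _, mem_filter.2 ⟨h₂, rfl⟩,
        by simpa using hne⟩
    · rintro ⟨-, ⟨a₁, b₁⟩, h₁, ⟨a₂, b₂⟩, h₂, hne⟩
      obtain ⟨hs₁, rfl⟩ := mem_filter.1 h₁
      obtain ⟨hs₂, rfl⟩ := mem_filter.1 h₂
      exact ⟨a₁, hs₁, a₂, hs₂, fun h => hne (by rw [h])⟩
  rw [this, Set.ncard_coe_finset]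
  exact card_filter_one_lt_card_fiber_add_card_image_le s Prod.snd

theorem exists_absolutelyContinuous_apply_singleton_eq {α : Type*} [MeasurableSpace α]
    [MeasurableSingletonClass α] (μ : Measure α) [IsFiniteMeasure μ] (m : α → ℝ≥0∞)
    (hm : ∀ x, μ {x} = 0 → m x = 0) : ∃ ν : Measure α, ν ≪ μ ∧ ∀ x, ν {x} = m x := by
  refine ⟨μ.withDensity fun x => m x / μ {x}, withDensity_absolutelyContinuous _ _, fun x => ?_⟩
  rw [withDensity_apply _ (measurableSet_singleton x), lintegral_singleton]
  by_cases hx : μ {x} = 0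
  · simp [hx, hm x hx]
  · exact ENNReal.div_mul_cancel hx (measure_ne_top μ _)

section Marginals

variable {U V : Type*} [MeasurableSpace U] [MeasurableSpace V]
  [MeasurableSingletonClass U] [MeasurableSingletonClass V]

theorem map_fst_apply_singleton [Fintype V] (μ : Measure (U × V)) (u : U) :
    μ.map Prod.fst {u} = ∑ v, μ {(u, v)} := by
  rw [Measure.map_apply measurable_fst (measurableSet_singleton u),
    show Prod.fst ⁻¹' {u} = (({u} ×ˢ univ : Finset (U × V)) : Set (U × V)) by
      ext ⟨a, b⟩; simp [eq_comm],
    ← sum_measure_singleton, sum_product, sum_singleton]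

theorem map_snd_apply_singleton [Fintype U] (μ : Measure (U × V)) (v : V) :
    μ.map Prod.snd {v} = ∑ u, μ {(u, v)} := by
  rw [Measure.map_apply measurable_snd (measurableSet_singleton v),
    show Prod.snd ⁻¹' {v} = ((univ ×ˢ {v} : Finset (U × V)) : Set (U × V)) by
      ext ⟨a, b⟩; simp [eq_comm],
    ← sum_measure_singleton, sum_product_right, sum_singleton]

theorem exists_absolutelyContinuous_same_marginals [Fintype U] [Fintype V]
    (μ : Measure (U × V)) [IsFiniteMeasure μ] {q : U × V → ℝ}
    (hq : IsDominatedCoupling (fun x => (μ {x}).toReal) q) :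
    ∃ ν : Measure (U × V), ν ≪ μ ∧ (∀ x, ν {x} = ENNReal.ofReal (q x)) ∧
      ν.map Prod.fst = μ.map Prod.fst ∧ ν.map Prod.snd = μ.map Prod.snd := by
  obtain ⟨hq0, hqμ, hrow, hcol⟩ := hq
  obtain ⟨ν, hνμ, hν⟩ := exists_absolutelyContinuous_apply_singleton_eq μ
    (fun x => ENNReal.ofReal (q x)) fun x hx => by simp [hqμ x (by simp [hx])]
  have hμ : ∀ x, μ {x} = ENNReal.ofReal (μ {x}).toReal := fun x =>
    (ENNReal.ofReal_toReal (measure_ne_top μ _)).symm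
  refine ⟨ν, hνμ, hν, Measure.ext_iff_singleton.2 fun u => ?_,
    Measure.ext_iff_singleton.2 fun v => ?_⟩
  · rw [map_fst_apply_singleton, map_fst_apply_singleton,
      Fintype.sum_congr _ _ fun v => hμ (u, v)]
    simp only [hν]
    rw [← ENNReal.ofReal_sum_of_nonneg fun v _ => hq0 _, hrow,
      ENNReal.ofReal_sum_of_nonneg fun v _ => ENNReal.toReal_nonneg]
  · rw [map_snd_apply_singleton, map_snd_apply_singleton,
      Fintype.sum_congr _ _ fun u => hμ (u, v)]
    simp only [hν]
    rw [← ENNReal.ofReal_sum_of_nonneg fun u _ => hq0 _, hcol,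
      ENNReal.ofReal_sum_of_nonneg fun u _ => ENNReal.toReal_nonneg]

end Marginals

namespace Marriage

theorem exists_coupling_committed_general
    {U V : Type} [Fintype U] [Fintype V]
    [MeasurableSpace U] [MeasurableSingletonClass U]
    [MeasurableSpace V] [MeasurableSingletonClass V]
    (ρ : Measure U) (σ : Measure V)
    (lam : Measure (U × V)) [IsProbabilityMeasure lam]
    (hfst : lam.map Prod.fst = ρ) (hsnd : lam.map Prod.snd = σ) :
    ∃ lam' : Measure (U × V), IsProbabilityMeasure lam' ∧
      lam'.map Prod.fst = ρ ∧ lam'.map Prod.snd = σ ∧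
      lam' ≪ lam ∧
      Set.ncard {v : V | ¬ Committed lam' v} ≤ Fintype.card U - 1 := by
  classical
  have : Nonempty U := (nonempty_of_isProbabilityMeasure lam).map Prod.fst
  obtain ⟨q, hq, hcard⟩ := exists_isDominatedCoupling_card_support_lt
    (p := fun x => (lam {x}).toReal) fun _ => ENNReal.toReal_nonneg
  obtain ⟨lam', hac, hlam', hfst', hsnd'⟩ := exists_absolutelyContinuous_same_marginals lam hq
  have hprob : IsProbabilityMeasure lam' :=
    (Measure.isProbabilityMeasure_map_iff measurable_fst.aemeasurable).1
      (hfst' ▸ Measure.isProbabilityMeasure_map measurable_fst.aemeasurable)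
  refine ⟨lam', hprob, hfst'.trans hfst, hsnd'.trans hsnd, hac, ?_⟩
  have hsupp : ∀ x, lam' {x} ≠ 0 ↔ q x ≠ 0 := fun x => by
    rw [hlam', ne_eq, ENNReal.ofReal_eq_zero, not_le]
    exact (hq.1 x : (0 : ℝ) ≤ q x).lt_iff_ne'
  have hcommit : {v | ¬ Committed lam' v} =
      {v | ¬ {u | (u, v) ∈ ({x | q x ≠ 0} : Finset (U × V))}.Subsingleton} := by
    ext v
    simp [Committed, hsupp]
  have := ncard_not_subsingleton_fiber_add_card_image_le ({x | q x ≠ 0} : Finset (U × V))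
  rw [hcommit]
  omega

/-- Keane–Smorodinsky marriage lemma. Given a coupling `λ` of `ρ` and `σ`
on finite sets `U × V`, there is a coupling `λ̃` of `ρ` and `σ`, absolutely continuous with
respect to `λ`, such that at most `|U| - 1` elements of `V` are not `λ̃`-committed. -/
theorem exists_coupling_committed
    {U V : Type} [Fintype U] [Fintype V]
    [MeasurableSpace U] [MeasurableSingletonClass U]
    [MeasurableSpace V] [MeasurableSingletonClass V]
    (ρ : Measure U) (σ : Measure V) [IsProbabilityMeasure ρ] [IsProbabilityMeasure σ]
    (lam : Measure (U × V)) [IsProbabilityMeasure lam]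
    (hfst : lam.map Prod.fst = ρ) (hsnd : lam.map Prod.snd = σ) :
    ∃ lam' : Measure (U × V), IsProbabilityMeasure lam' ∧
      lam'.map Prod.fst = ρ ∧ lam'.map Prod.snd = σ ∧
      lam' ≪ lam ∧
      Set.ncard {v : V | ¬ Committed lam' v} ≤ Fintype.card U - 1 :=
  exists_coupling_committed_general ρ σ lam hfst hsnd

end Marriage
end

section
/- Let X and Y be discrete random variables defined on a common probability space. Then for every t, s > 0: P(𝓘(Y) ≤ t) ≤ P(X ≠ Y) + P(𝓘(X) ≤ t + s) + e^{−s}. -/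
open MeasureTheory
open scoped ENNReal

namespace Info

/-- The information function `𝓘(X) = -log p_X(X)` of a discrete random variable. -/
noncomputable def info {Ω S : Type*} [MeasurableSpace Ω] (μ : Measure Ω) (X : Ω → S)
    (ω : Ω) : ℝ :=
  -Real.log ((μ (X ⁻¹' {X ω})).toReal)

/-- For discrete random variables `X, Y` on a common probability space and
all `t, s > 0`: `P(𝓘(Y) ≤ t) ≤ P(X ≠ Y) + P(𝓘(X) ≤ t + s) + e^{-s}`. -/
theorem info_comparison_bound
    {Ω S : Type} [MeasurableSpace Ω]
    [Countable S] [MeasurableSpace S] [MeasurableSingletonClass S]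
    (μ : Measure Ω) [IsProbabilityMeasure μ]
    (X Y : Ω → S) (hX : Measurable X) (hY : Measurable Y)
    (t s : ℝ) (ht : 0 < t) (hs : 0 < s) :
    μ {ω | info μ Y ω ≤ t}
      ≤ μ {ω | X ω ≠ Y ω} + μ {ω | info μ X ω ≤ t + s} + ENNReal.ofReal (Real.exp (-s)) := by
  set εt := ENNReal.ofReal (Real.exp (-t)) with hεt
  set εts := ENNReal.ofReal (Real.exp (-(t + s))) with hεts
  set B : Set S := {a | εt ≤ μ (Y ⁻¹' {a}) ∧ μ (X ⁻¹' {a}) ≤ εts} with hB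
  set T : Set S := {a | μ (Y ⁻¹' {a}) = 0} with hT
  -- the set of ω where p_Y(Y ω) = 0 is null
  have hTnull : μ (Y ⁻¹' T) = 0 := by
    rw [measure_preimage_eq_zero_iff_of_countable (Set.to_countable T)]
    intro a ha; exact ha
  -- the key bound on μ (X ⁻¹' B)
  have hBsum : μ (X ⁻¹' B) ≤ ENNReal.ofReal (Real.exp (-s)) := by
    have h1 : μ (X ⁻¹' B) ≤ ∑' a : B, μ (X ⁻¹' {(a : S)}) := by
      rw [← Set.biUnion_preimage_singleton]
      exact measure_biUnion_le μ (Set.to_countable B) _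
    have h2 : ∀ a : B, μ (X ⁻¹' {(a : S)})
        ≤ ENNReal.ofReal (Real.exp (-s)) * μ (Y ⁻¹' {(a : S)}) := by
      rintro ⟨a, ha1, ha2⟩
      calc μ (X ⁻¹' {a}) ≤ εts := ha2
        _ = ENNReal.ofReal (Real.exp (-s)) * εt := by
            rw [hεts, hεt, ← ENNReal.ofReal_mul (Real.exp_nonneg _), ← Real.exp_add]
            ring_nf
        _ ≤ _ := mul_le_mul_right ha1 _
    have h3 : (∑' a : B, μ (Y ⁻¹' {(a : S)})) ≤ 1 := by
      rw [tsum_measure_preimage_singleton (Set.to_countable B)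
        (fun y _ => hY (measurableSet_singleton y))]
      exact prob_le_one
    calc μ (X ⁻¹' B) ≤ ∑' a : B, μ (X ⁻¹' {(a : S)}) := h1
      _ ≤ ∑' a : B, ENNReal.ofReal (Real.exp (-s)) * μ (Y ⁻¹' {(a : S)}) :=
          ENNReal.tsum_le_tsum h2
      _ = ENNReal.ofReal (Real.exp (-s)) * ∑' a : B, μ (Y ⁻¹' {(a : S)}) :=
          ENNReal.tsum_mul_left
      _ ≤ ENNReal.ofReal (Real.exp (-s)) * 1 := mul_le_mul_right h3 _
      _ = ENNReal.ofReal (Real.exp (-s)) := mul_one _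
  -- the inclusion
  have hsub : {ω | info μ Y ω ≤ t} ⊆
      ({ω | X ω ≠ Y ω} ∪ {ω | info μ X ω ≤ t + s}) ∪ (X ⁻¹' B ∪ Y ⁻¹' T) := by
    intro ω hω
    by_cases hXY : X ω = Y ω
    · by_cases hIX : info μ X ω ≤ t + s
      · exact Or.inl (Or.inr hIX)
      · by_cases hY0 : μ (Y ⁻¹' {Y ω}) = 0
        · exact Or.inr (Or.inr hY0)
        · refine Or.inr (Or.inl ?_)
          have hYne : μ (Y ⁻¹' {Y ω}) ≠ ⊤ := measure_ne_top μ _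
          have hXne : μ (X ⁻¹' {X ω}) ≠ ⊤ := measure_ne_top μ _
          have hYpos : 0 < (μ (Y ⁻¹' {Y ω})).toReal := ENNReal.toReal_pos hY0 hYne
          -- first condition: εt ≤ μ (Y ⁻¹' {X ω})
          have hω' : -Real.log ((μ (Y ⁻¹' {Y ω})).toReal) ≤ t := hω
          have h1 : Real.exp (-t) ≤ (μ (Y ⁻¹' {Y ω})).toReal := by
            have := Real.exp_le_exp.2 (by linarith : -t ≤ Real.log ((μ (Y ⁻¹' {Y ω})).toReal))
            rwa [Real.exp_log hYpos] at this
          have hc1 : εt ≤ μ (Y ⁻¹' {X ω}) := by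
            rw [hXY, hεt]
            exact ENNReal.ofReal_le_of_le_toReal h1
          -- second condition: μ (X ⁻¹' {X ω}) ≤ εts
          have hIX' : t + s < -Real.log ((μ (X ⁻¹' {X ω})).toReal) := lt_of_not_ge hIX
          have hlog : Real.log ((μ (X ⁻¹' {X ω})).toReal) < -(t + s) := by linarith
          have hXpos : 0 < (μ (X ⁻¹' {X ω})).toReal := by
            rcases lt_or_eq_of_le (ENNReal.toReal_nonneg :
                (0:ℝ) ≤ (μ (X ⁻¹' {X ω})).toReal) with h | h
            · exact h
            · exfalso
              rw [← h, Real.log_zero] at hlog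
              linarith
          have h2 : (μ (X ⁻¹' {X ω})).toReal ≤ Real.exp (-(t + s)) := by
            have := Real.exp_le_exp.2 hlog.le
            rwa [Real.exp_log hXpos] at this
          have hc2 : μ (X ⁻¹' {X ω}) ≤ εts := by
            rw [hεts, ← ENNReal.ofReal_toReal hXne]
            exact ENNReal.ofReal_le_ofReal h2
          exact ⟨hc1, hc2⟩
    · exact Or.inl (Or.inl hXY)
  calc μ {ω | info μ Y ω ≤ t}
      ≤ μ (({ω | X ω ≠ Y ω} ∪ {ω | info μ X ω ≤ t + s}) ∪ (X ⁻¹' B ∪ Y ⁻¹' T)) :=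
        measure_mono hsub
    _ ≤ μ ({ω | X ω ≠ Y ω} ∪ {ω | info μ X ω ≤ t + s}) + μ (X ⁻¹' B ∪ Y ⁻¹' T) :=
        measure_union_le _ _
    _ ≤ (μ {ω | X ω ≠ Y ω} + μ {ω | info μ X ω ≤ t + s}) + (μ (X ⁻¹' B) + μ (Y ⁻¹' T)) :=
        add_le_add (measure_union_le _ _) (measure_union_le _ _)
    _ ≤ (μ {ω | X ω ≠ Y ω} + μ {ω | info μ X ω ≤ t + s})
          + (ENNReal.ofReal (Real.exp (-s)) + 0) := by
        exact add_le_add le_rfl (add_le_add hBsum hTnull.le)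
    _ = μ {ω | X ω ≠ Y ω} + μ {ω | info μ X ω ≤ t + s} + ENNReal.ofReal (Real.exp (-s)) := by
        rw [add_zero]

end Info
end

section
/- Let (X,W) and (X̃,W) be two ergodic joinings of countable-valued ℤ-processes X, X̃ with a ℤ-process W. Suppose there exists a sequence (π_i, π̃_i)_{i≥1} of finitary partial isomorphisms of X and X̃ relative to W, each extending the previous one, such that the uncertainties of π_i(X,W) and of π̃_i(X̃,W) both tend to 0 as i → ∞. Then X and X̃ are finitarily isomorphic relative to W. -/
open MeasureTheory ProbabilityTheory Filter
open scoped ENNReal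

namespace ZP

noncomputable section

instance optionMeasurableSpace {A : Type*} : MeasurableSpace (Option A) := ⊤

instance optionDiscrete {A : Type*} : DiscreteMeasurableSpace (Option A) :=
  inferInstanceAs (@DiscreteMeasurableSpace (Option A) ⊤)

def zshift {A : Type*} (x : ℤ → A) : ℤ → A := fun n => x (n + 1)

def IsStationary {A : Type*} [MeasurableSpace A] (μ : Measure (ℤ → A)) : Prop :=
  Measure.map zshift μ = μ

def windowSigma (A : Type*) [m : MeasurableSpace A] (n : ℕ) : MeasurableSpace (ℤ → A) :=
  ⨆ i ∈ Finset.Icc (-(n : ℤ)) (n : ℤ), MeasurableSpace.comap (fun x : ℤ → A => x i) m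

def StopFinitary {A B : Type*} [MeasurableSpace A] [MeasurableSpace B]
    (ν : Measure (ℤ → B)) (φ : (ℤ → B) → ℤ → A) : Prop :=
  ∃ τ : (ℤ → B) → ℕ∞,
    (∀ n : ℕ, MeasurableSet[windowSigma B n] {y | τ y ≤ (n : ℕ∞)}) ∧
    ν {y | τ y = ⊤} = 0 ∧
    ∀ s : Set A, MeasurableSet s → ∀ n : ℕ,
      MeasurableSet[windowSigma B n] ({y | φ y 0 ∈ s} ∩ {y | τ y ≤ (n : ℕ∞)})

def FactorMap {A B : Type*} [MeasurableSpace A] [MeasurableSpace B] (ν : Measure (ℤ → B))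
    (μ : Measure (ℤ → A)) (φ : (ℤ → B) → ℤ → A) : Prop :=
  Measurable φ ∧ (∀ᵐ y ∂ν, φ (zshift y) = zshift (φ y)) ∧ ν.map φ = μ

def FinitaryFactorMap {A B : Type*} [MeasurableSpace A] [MeasurableSpace B] (ν : Measure (ℤ → B))
    (μ : Measure (ℤ → A)) (φ : (ℤ → B) → ℤ → A) : Prop :=
  FactorMap ν μ φ ∧ StopFinitary ν φ

def FinitarilyIsomorphic {A B : Type*} [MeasurableSpace A] [MeasurableSpace B]
    (μ : Measure (ℤ → A)) (ν : Measure (ℤ → B)) : Prop :=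
  ∃ φ ψ, FinitaryFactorMap μ ν φ ∧ FinitaryFactorMap ν μ ψ ∧
    (∀ᵐ x ∂μ, ψ (φ x) = x) ∧ (∀ᵐ y ∂ν, φ (ψ y) = y)

def H {Ω S : Type*} [MeasurableSpace Ω] (μ : Measure Ω) (X : Ω → S) : ℝ≥0∞ :=
  ∑' s : S, ENNReal.ofReal (Real.negMulLog (μ (X ⁻¹' {s})).toReal)

def blockRV {A : Type*} (n : ℕ) (x : ℤ → A) : Fin n → A := fun i => x ((i : ℤ) + 1)

def ksEntropyAux {A : Type*} [MeasurableSpace A] (μ : Measure (ℤ → A)) : ℝ≥0∞ :=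
  ⨅ n : ℕ, H μ (blockRV (n + 1)) / (n + 1 : ℝ≥0∞)

def ksEntropy {A : Type*} [MeasurableSpace A] (μ : Measure (ℤ → A)) : ℝ≥0∞ :=
  ⨆ (φ : (ℤ → A) → ℤ → ℕ) (_ : Measurable φ)
    (_ : ∀ᵐ x ∂μ, φ (zshift x) = zshift (φ x)) (_ : H (μ.map φ) (fun y => y 0) ≠ ⊤),
    ksEntropyAux (μ.map φ)

def IsIID {A : Type*} [MeasurableSpace A] (μ : Measure (ℤ → A)) : Prop :=
  iIndepFun (fun i : ℤ => fun x : ℤ → A => x i) μ ∧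
  ∀ i j : ℤ, μ.map (fun x => x i) = μ.map (fun x => x j)

def KDependent {A : Type*} [MeasurableSpace A] (k : ℕ) (μ : Measure (ℤ → A)) : Prop :=
  ∀ S T : Set ℤ, (∀ a ∈ S, ∀ b ∈ T, (k : ℤ) < |a - b|) →
    IndepFun (fun x : ℤ → A => S.restrict x) (fun x : ℤ → A => T.restrict x) μ

def Aperiodic {A : Type*} [MeasurableSpace A] (μ : Measure (ℤ → A)) : Prop :=
  ∀ᵐ x ∂μ, ∀ p : ℕ, 0 < p → ∃ n : ℤ, x (n + p) ≠ x n

/-! ### Pair (joint) processes -/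

def seqFst {A B : Type*} (ω : ℤ → A × B) : ℤ → A := fun i => (ω i).1

def seqSnd {A B : Type*} (ω : ℤ → A × B) : ℤ → B := fun i => (ω i).2

/-- The joint process `μ` on the alphabet `C × B` is an independent product of an i.i.d.
process (the first component) with the process `w` (the second component). -/
def IsIIDProdOf {C B : Type*} [MeasurableSpace C] [MeasurableSpace B]
    (μ : Measure (ℤ → C × B)) (w : Measure (ℤ → B)) : Prop :=
  IsIID (μ.map seqFst) ∧ μ.map (fun ω => (seqFst ω, seqSnd ω)) = (μ.map seqFst).prod w

/-- A finitary isomorphism between two joint processes which fixes the second (the `W`-)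
component. -/
def RelFinitaryIso {A A' B : Type*} [MeasurableSpace A] [MeasurableSpace A'] [MeasurableSpace B]
    (μ : Measure (ℤ → A × B)) (ν : Measure (ℤ → A' × B)) : Prop :=
  ∃ π π', FinitaryFactorMap μ ν π ∧ FinitaryFactorMap ν μ π' ∧
    (∀ᵐ ω ∂μ, seqSnd (π ω) = seqSnd ω ∧ π' (π ω) = ω) ∧
    (∀ᵐ ω' ∂ν, seqSnd (π' ω') = seqSnd ω' ∧ π (π' ω') = ω')

/-! ### Conditional information, entropy -/

def condInfo {α S β : Type*} [MeasurableSpace α] [MeasurableSpace S] [StandardBorelSpace S]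
    [Nonempty S] [MeasurableSpace β] (μ : Measure α) [IsFiniteMeasure μ]
    (U : α → S) (V : α → β) (ω : α) : ℝ :=
  -Real.log ((condDistrib U V μ (V ω)) {U ω}).toReal

def condH {α S β : Type*} [MeasurableSpace α] [MeasurableSpace S] [StandardBorelSpace S]
    [Nonempty S] [MeasurableSpace β] (μ : Measure α) [IsFiniteMeasure μ]
    (U : α → S) (V : α → β) : ℝ≥0∞ :=
  ∫⁻ ω, ENNReal.ofReal (condInfo μ U V ω) ∂μ

/-- Conditional Kolmogorov–Sinai entropy `h(ξ | η) = lim_n H(ξ_{[1,n]} | η)/n`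
(for stationary processes the limit equals the infimum). -/
def condKS {E C D : Type*} [MeasurableSpace E] [MeasurableSpace C] [StandardBorelSpace C]
    [Nonempty C] [MeasurableSpace D] (μ : Measure (ℤ → E)) [IsFiniteMeasure μ]
    (ξ : (ℤ → E) → ℤ → C) (η : (ℤ → E) → ℤ → D) : ℝ≥0∞ :=
  ⨅ n : ℕ, condH μ (fun ω => blockRV (n + 1) (ξ ω)) η / (n + 1 : ℝ≥0∞)

/-! ### Relative finitary dependence -/

open Classical in
/-- The restriction `x_S` of `x` to a (possibly random) subset `S ⊆ ℤ`, encoded with `none`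
outside of `S`. -/
def mask {C : Type*} (S : Set ℤ) (x : ℤ → C) : ℤ → Option C :=
  fun i => if i ∈ S then some (x i) else none

/-- `ξ` is `K`-dependent relative to `η`: almost surely, `ξ_S` and `ξ_T` are conditionally
independent given `η` for any (η-measurably chosen) `S, T ⊆ ℤ` with
`|a-b| > max {K_a, K_b}` for all `a ∈ S`, `b ∈ T`. -/
def RelKDependent {E C D : Type*} [MeasurableSpace E] [StandardBorelSpace (ℤ → E)]
    [MeasurableSpace C] [MeasurableSpace D]
    (μ : Measure (ℤ → E)) [IsFiniteMeasure μ]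
    (ξ : (ℤ → E) → ℤ → C) (η : (ℤ → E) → ℤ → D) (hη : Measurable η)
    (K : (ℤ → D) → ℤ → ℕ) : Prop :=
  ∀ S T : (ℤ → D) → Set ℤ,
    (∀ i, MeasurableSet {w : ℤ → D | i ∈ S w}) →
    (∀ i, MeasurableSet {w : ℤ → D | i ∈ T w}) →
    (∀ᵐ ω ∂μ, ∀ a ∈ S (η ω), ∀ b ∈ T (η ω),
        ((max (K (η ω) a) (K (η ω) b) : ℕ) : ℤ) < |a - b|) →
    CondIndepFun (MeasurableSpace.comap η inferInstance) hη.comap_le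
      (fun ω => mask (S (η ω)) (ξ ω)) (fun ω => mask (T (η ω)) (ξ ω)) μ

/-- The block `ξ_{[n-m, n+m]}` of the process `ξ`. -/
def blockAt {E C : Type*} (ξ : (ℤ → E) → ℤ → C) (m : ℕ) (n : ℤ) (ω : ℤ → E) :
    Fin (2 * m + 1) → C :=
  fun j => ξ ω (n - (m : ℤ) + (j : ℤ))

/-- The process of conditional laws `(𝓛(ξ_{[n-m,n+m]} | η))_{n ∈ ℤ}` is a stop-finitary factor
of `η`, for every `m`. -/
def FinCondLaws {E C D : Type*} [MeasurableSpace E] [MeasurableSpace C] [StandardBorelSpace C]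
    [Nonempty C] [MeasurableSpace D] (μ : Measure (ℤ → E)) [IsFiniteMeasure μ]
    (ξ : (ℤ → E) → ℤ → C) (η : (ℤ → E) → ℤ → D) : Prop :=
  ∀ m : ℕ, ∃ ψ : (ℤ → D) → ℤ → Measure (Fin (2 * m + 1) → C),
    Measurable ψ ∧ (∀ᵐ w ∂(μ.map η), ψ (zshift w) = zshift (ψ w)) ∧
    StopFinitary (μ.map η) ψ ∧
    ∀ n : ℤ, ∀ᵐ ω ∂μ, ψ (η ω) n = condDistrib (blockAt ξ m n) η μ (η ω)

/-- `ξ` is finitarily dependent relative to `η` (under the ambient joint law `μ`):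
it is finitarily `K`-dependent relative to `η` for some `ℕ`-valued process `K` which is a
stop-finitary factor of `η`. -/
def RelFinitarilyDependent {E C D : Type*} [MeasurableSpace E] [StandardBorelSpace (ℤ → E)]
    [MeasurableSpace C] [StandardBorelSpace C] [Nonempty C] [MeasurableSpace D]
    (μ : Measure (ℤ → E)) [IsFiniteMeasure μ]
    (ξ : (ℤ → E) → ℤ → C) (η : (ℤ → E) → ℤ → D) : Prop :=
  ∃ (hη : Measurable η) (K : (ℤ → D) → ℤ → ℕ),
    Measurable K ∧ (∀ᵐ w ∂(μ.map η), K (zshift w) = zshift (K w)) ∧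
    StopFinitary (μ.map η) K ∧ RelKDependent μ ξ η hη K ∧ FinCondLaws μ ξ η

/-- `X` (the first component of the joint process `μ`) is finitarily pro-dependent relative to
`W` (the second component): there is a sequence of partial processes, each a finitary factor of
`(W, X)`, increasing to `X`, with the `n`-th one finitarily dependent relative to
`(W, X⁽¹⁾, …, X⁽ⁿ⁻¹⁾)`. -/
def RelProDependent {A B : Type*} [MeasurableSpace A] [Countable A] [DiscreteMeasurableSpace A]
    [MeasurableSpace B] [StandardBorelSpace B]
    (μ : Measure (ℤ → A × B)) [IsFiniteMeasure μ] : Prop :=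
  ∃ φ : ℕ → ((ℤ → A × B) → ℤ → Option A),
    (∀ n, Measurable (φ n) ∧ (∀ᵐ ω ∂μ, φ n (zshift ω) = zshift (φ n ω)) ∧ StopFinitary μ (φ n)) ∧
    (∀ n, ∀ᵐ ω ∂μ, ∀ i a, φ n ω i = some a → (ω i).1 = a) ∧
    (∀ n, ∀ᵐ ω ∂μ, ∀ i, φ n ω i ≠ none → φ (n + 1) ω i = φ n ω i) ∧
    (∀ᵐ ω ∂μ, ∀ i, ∃ n, φ n ω i = some ((ω i).1)) ∧
    ∀ n, RelFinitarilyDependent μ (φ n)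
      (fun ω => fun i => ((ω i).2, fun j : Fin n => φ j ω i))

/-! ### Marker processes -/

/-- A non-trivial `{0,1}`-valued process (the occurrence probability is in `(0,1)`). -/
def NontrivialMarker (ν : Measure (ℤ → Bool)) : Prop :=
  0 < ν {w | w 0 = true} ∧ ν {w | w 0 = true} < 1

/-- The restriction of the `X`-component of a joint configuration to `(-∞, m]`. -/
def leftRV {A : Type*} (m : ℤ) (ω : ℤ → A × Bool) : {i : ℤ // i ≤ m} → A :=
  fun i => (ω i).1

/-- The restriction of the `X`-component of a joint configuration to `[m, ∞)`. -/
def rightRV {A : Type*} (m : ℤ) (ω : ℤ → A × Bool) : {i : ℤ // m ≤ i} → A :=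
  fun i => (ω i).1

/-- The restriction of the marker component to `(-∞, 0]`. -/
def markerLeft {A : Type*} (ω : ℤ → A × Bool) : {i : ℤ // i ≤ (0 : ℤ)} → Bool :=
  fun i => (ω i).2

/-- The restriction of the marker component to `[0, ∞)`. -/
def markerRight {A : Type*} (ω : ℤ → A × Bool) : {i : ℤ // (0 : ℤ) ≤ i} → Bool :=
  fun i => (ω i).2

/-- The second component of the joint law `μ` is a *good marker process* for the first:
it is a marker process for `X` (a non-trivial `{0,1}`-valued finitary factor of `X`) and there
is `m ≥ 1` such that, a.s. on the event `M₀ = 1`, the tails `X_{(-∞,-m]}` and `X_{[m,∞)}` are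
conditionally independent given `M`, with conditional distributions depending only on
`M_{(-∞,0]}` and `M_{[0,∞)}` respectively. -/
def GoodMarker {A : Type*} [MeasurableSpace A] (μ : Measure (ℤ → A × Bool)) : Prop :=
  (∃ φM : (ℤ → A) → ℤ → Bool,
    FinitaryFactorMap (μ.map seqFst) (μ.map seqSnd) φM ∧
    ∀ᵐ ω ∂μ, φM (seqFst ω) = seqSnd ω) ∧
  NontrivialMarker (μ.map seqSnd) ∧
  ∃ m : ℕ, 1 ≤ m ∧
    ∀ (U : Set ({i : ℤ // i ≤ -(m : ℤ)} → A)) (V : Set ({i : ℤ // (m : ℤ) ≤ i} → A)),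
      MeasurableSet U → MeasurableSet V →
      ∀ᵐ ω ∂μ, (ω 0).2 = true →
        (μ[Set.indicator (leftRV (-(m : ℤ)) ⁻¹' U ∩ rightRV (m : ℤ) ⁻¹' V)
            (fun _ => (1 : ℝ)) | MeasurableSpace.comap seqSnd inferInstance]) ω
        = (μ[Set.indicator (leftRV (-(m : ℤ)) ⁻¹' U)
              (fun _ => (1 : ℝ)) | MeasurableSpace.comap markerLeft inferInstance]) ω
          * (μ[Set.indicator (rightRV (m : ℤ) ⁻¹' V)
              (fun _ => (1 : ℝ)) | MeasurableSpace.comap markerRight inferInstance]) ω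

/-- The first occurrence of the marker at or before `n` (the left endpoint of the marker block
of `n`). -/
def blockStart (w : ℤ → Bool) (n : ℤ) : ℤ := sSup {k : ℤ | k ≤ n ∧ w k = true}

/-- The first occurrence of the marker strictly after `n` (past the marker block of `n`). -/
def blockEnd (w : ℤ → Bool) (n : ℤ) : ℤ := sInf {k : ℤ | n < k ∧ w k = true}

/-- The interval `I^M_n` of the partition of `ℤ` induced by the occurrences of the marker `w`
(each occurrence starts the interval to its right). -/
def blockInterval (w : ℤ → Bool) (n : ℤ) : Set ℤ := Set.Ico (blockStart w n) (blockEnd w n)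

/-- `ξ` is `M`-block-dependent relative to `η` (where `M = φM ∘ η` is a marker factor of `η`):
`ξ_{I^M_0}` and `ξ_{ℤ ∖ I^M_0}` are conditionally independent given `η`. -/
def MBlockDependent {E C D : Type*} [MeasurableSpace E] [StandardBorelSpace (ℤ → E)]
    [MeasurableSpace C] [MeasurableSpace D] (μ : Measure (ℤ → E)) [IsFiniteMeasure μ]
    (ξ : (ℤ → E) → ℤ → C) (η : (ℤ → E) → ℤ → D) (hη : Measurable η)
    (φM : (ℤ → D) → ℤ → Bool) : Prop :=
  CondIndepFun (MeasurableSpace.comap η inferInstance) hη.comap_le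
    (fun ω => mask (blockInterval (φM (η ω)) 0) (ξ ω))
    (fun ω => mask (blockInterval (φM (η ω)) 0)ᶜ (ξ ω)) μ


/-- A partial isomorphism `(π, π')` of the `X`- and `X̃`-components of the joint processes
`μ = 𝓛(X, W)` and `ν = 𝓛(X̃, W)` relative to the common `W`-component: a pair of equivariant
measurable maps such that, under some joining relative to `W`, `π(X, W)` is a partial process
of `X̃` and `π'(X̃, W)` is a partial process of `X`. -/
def PartialIso {A A' B : Type*} [MeasurableSpace A] [MeasurableSpace A'] [MeasurableSpace B]
    (μ : Measure (ℤ → A × B)) (ν : Measure (ℤ → A' × B))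
    (π : (ℤ → A × B) → ℤ → Option A') (π' : (ℤ → A' × B) → ℤ → Option A) : Prop :=
  Measurable π ∧ Measurable π' ∧
  (∀ᵐ ω ∂μ, π (zshift ω) = zshift (π ω)) ∧ (∀ᵐ ω ∂ν, π' (zshift ω) = zshift (π' ω)) ∧
  ∃ ρ : Measure (ℤ → (A × A') × B), IsProbabilityMeasure ρ ∧
    ρ.map (fun ω => fun i => (((ω i).1).1, (ω i).2)) = μ ∧
    ρ.map (fun ω => fun i => (((ω i).1).2, (ω i).2)) = ν ∧
    (∀ᵐ ω ∂ρ, ∀ (i : ℤ) (a : A'),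
      π (fun j => (((ω j).1).1, (ω j).2)) i = some a → ((ω i).1).2 = a) ∧
    (∀ᵐ ω ∂ρ, ∀ (i : ℤ) (a : A),
      π' (fun j => (((ω j).1).2, (ω j).2)) i = some a → ((ω i).1).1 = a)

/-!
Let `Φ` read the `X̃`-letter at each coordinate off the first partial isomorphism `π i` found to
have decided it, searching over pairs (time, index) so that `Φ` is again stop-finitary; it is a.s.
everywhere defined because the uncertainties vanish. `Ψ` is built from the `π' i` in the same way.
Under the joining witnessing `π i`, `Φ(X, W)` and `(X̃, W)` differ at a given coordinate with
probability at most the uncertainty of `π i`, so on a window of radius `n` their laws differ by at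
most `2n + 1` times it, and `Φ` pushes `𝓛(X, W)` to `𝓛(X̃, W)`. For `Ψ ∘ Φ = id`: when the
stopping time of `Ψ` at `(X̃, W)` is at most `n` and `Φ(X, W)` agrees with `(X̃, W)` on the window
of radius `n`, `Ψ(Φ(X, W))₀ = Ψ(X̃, W)₀`, which is `(X₀, W₀)` up to the uncertainty of `π' i`.
Letting `i → ∞` and then `n → ∞` gives `Ψ(Φ(X, W))₀ = (X₀, W₀)` a.s., and stationarity spreads
this to every coordinate.
-/

open scoped Topology

def shiftBy {E : Type*} (n : ℤ) (x : ℤ → E) : ℤ → E := fun k => x (k + n)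

def slide {E D : Type*} (φ : (ℤ → E) → D) (x : ℤ → E) : ℤ → D := fun n => φ (shiftBy n x)

section Shift

variable {E D : Type*}

@[simp]
theorem shiftBy_apply (n : ℤ) (x : ℤ → E) (k : ℤ) : shiftBy n x k = x (k + n) := rfl

@[simp]
theorem shiftBy_zero (x : ℤ → E) : shiftBy 0 x = x := by
  funext k; simp

@[simp]
theorem shiftBy_shiftBy (n m : ℤ) (x : ℤ → E) : shiftBy n (shiftBy m x) = shiftBy (n + m) x := by
  funext k; simp [add_assoc]

theorem zshift_eq_shiftBy_one : (zshift : (ℤ → E) → ℤ → E) = shiftBy 1 := rfl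

theorem shiftBy_comm_of_forall_zshift_comm {π : (ℤ → E) → ℤ → D} {x : ℤ → E}
    (hx : ∀ n : ℤ, π (zshift (shiftBy n x)) = zshift (π (shiftBy n x))) (k : ℤ) :
    π (shiftBy k x) = shiftBy k (π x) := by
  simp only [zshift_eq_shiftBy_one, shiftBy_shiftBy] at hx
  induction k using Int.induction_on with
  | zero => simp
  | succ m ih => rw [add_comm, hx, ih, shiftBy_shiftBy]
  | pred m ih =>
    have h := congrArg (shiftBy (-1)) (hx (-m - 1))
    simp only [shiftBy_shiftBy, add_sub_cancel, ih] at h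
    simpa [sub_eq_add_neg, add_comm] using h.symm

@[simp]
theorem slide_apply (φ : (ℤ → E) → D) (x : ℤ → E) (n : ℤ) : slide φ x n = φ (shiftBy n x) := rfl

theorem slide_shiftBy (φ : (ℤ → E) → D) (k : ℤ) (x : ℤ → E) :
    slide φ (shiftBy k x) = shiftBy k (slide φ x) := by
  funext n; simp [add_comm]

variable [MeasurableSpace E] {μ : Measure (ℤ → E)}

theorem measurable_shiftBy (n : ℤ) : Measurable (shiftBy (E := E) n) :=
  measurable_pi_lambda _ fun k => measurable_pi_apply (k + n)

theorem measurable_slide [MeasurableSpace D] {φ : (ℤ → E) → D} (hφ : Measurable φ) :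
    Measurable (slide φ) :=
  measurable_pi_lambda _ fun n => hφ.comp (measurable_shiftBy n)

theorem measurePreserving_shiftBy (h : MeasurePreserving zshift μ μ) (n : ℤ) :
    MeasurePreserving (shiftBy n) μ μ := by
  have hneg : MeasurePreserving (shiftBy (-1)) μ μ := by
    refine ⟨measurable_shiftBy _, ?_⟩
    conv_lhs => rw [← h.map_eq]
    rw [Measure.map_map (measurable_shiftBy _) h.measurable, zshift_eq_shiftBy_one]
    simp [Function.comp_def]
  induction n using Int.induction_on with
  | zero => convert MeasurePreserving.id μ; funext x; simp
  | succ m ih => convert h.comp ih using 1; funext x; simp [zshift_eq_shiftBy_one, add_comm]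
  | pred m ih => convert hneg.comp ih using 1; funext x; simp [sub_eq_add_neg, add_comm]

theorem ae_forall_shiftBy (h : MeasurePreserving zshift μ μ) {p : (ℤ → E) → Prop}
    (hp : ∀ᵐ x ∂μ, p x) : ∀ᵐ x ∂μ, ∀ n : ℤ, p (shiftBy n x) :=
  ae_all_iff.2 fun n => (measurePreserving_shiftBy h n).quasiMeasurePreserving.ae hp

theorem ae_shiftBy_comm (h : MeasurePreserving zshift μ μ) {π : (ℤ → E) → ℤ → D}
    (hπ : ∀ᵐ x ∂μ, π (zshift x) = zshift (π x)) :
    ∀ᵐ x ∂μ, ∀ k : ℤ, π (shiftBy k x) = shiftBy k (π x) := by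
  filter_upwards [ae_forall_shiftBy h hπ] with x hx using shiftBy_comm_of_forall_zshift_comm hx

theorem measure_apply_mem_eq [MeasurableSpace D] (h : MeasurePreserving zshift μ μ)
    {π : (ℤ → E) → ℤ → D} (hm : Measurable π) (hπ : ∀ᵐ x ∂μ, π (zshift x) = zshift (π x))
    {s : Set D} (hs : MeasurableSet s) (k : ℤ) :
    μ {x | π x k ∈ s} = μ {x | π x 0 ∈ s} := by
  have hk : {x | π x k ∈ s} =ᵐ[μ] shiftBy k ⁻¹' {x | π x 0 ∈ s} := by
    filter_upwards [ae_shiftBy_comm h hπ] with x hx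
    change (π x k ∈ s) = (π (shiftBy k x) 0 ∈ s)
    simp [hx]
  have hs0 : MeasurableSet {x | π x 0 ∈ s} := (measurable_pi_apply 0).comp hm hs
  rw [measure_congr hk, (measurePreserving_shiftBy h k).measure_preimage hs0.nullMeasurableSet]

theorem ae_eq_of_ae_apply_zero_eq (h : MeasurePreserving zshift μ μ) {T : (ℤ → E) → ℤ → E}
    (hT : ∀ k x, T (shiftBy k x) = shiftBy k (T x)) (h0 : ∀ᵐ x ∂μ, T x 0 = x 0) :
    ∀ᵐ x ∂μ, T x = x := by
  filter_upwards [ae_forall_shiftBy h h0] with x hx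
  funext k
  simpa [hT] using hx k

end Shift

section Window

variable {E : Type*} [MeasurableSpace E]

theorem comap_eval_le_windowSigma {n : ℕ} {i : ℤ} (hi : i ∈ Finset.Icc (-(n : ℤ)) n) :
    MeasurableSpace.comap (fun x : ℤ → E => x i) ‹_› ≤ windowSigma E n :=
  le_iSup₂ (f := fun i (_ : i ∈ Finset.Icc (-(n : ℤ)) n) =>
    MeasurableSpace.comap (fun x : ℤ → E => x i) _) i hi

theorem windowSigma_mono {n m : ℕ} (h : n ≤ m) : windowSigma E n ≤ windowSigma E m :=
  iSup₂_le fun _ hi => comap_eval_le_windowSigma (by simp only [Finset.mem_Icc] at hi ⊢; omega)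

theorem windowSigma_le_comap_domRestrict (n : ℕ) :
    windowSigma E n ≤
      MeasurableSpace.comap (Set.Icc (-(n : ℤ)) n).domRestrict MeasurableSpace.pi := by
  refine iSup₂_le fun i hi => ?_
  have hi' : i ∈ Set.Icc (-(n : ℤ)) n := by simpa using hi
  rw [show (fun x : ℤ → E => x i) = (fun r => r ⟨i, hi'⟩) ∘ (Set.Icc (-(n : ℤ)) n).domRestrict
    from rfl, ← MeasurableSpace.comap_comp]
  exact MeasurableSpace.comap_mono (measurable_pi_apply _).comap_le

theorem windowSigma_le_pi (n : ℕ) : windowSigma E n ≤ MeasurableSpace.pi :=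
  iSup₂_le fun i _ => (measurable_pi_apply i).comap_le

theorem measurableSet_windowSigma_eval_zero_preimage (n : ℕ) {t : Set E} (ht : MeasurableSet t) :
    MeasurableSet[windowSigma E n] ((fun x : ℤ → E => x 0) ⁻¹' t) :=
  comap_eval_le_windowSigma (by simp) _ ⟨t, ht, rfl⟩

theorem mem_iff_of_eqOn_window {n : ℕ} {S : Set (ℤ → E)} (hS : MeasurableSet[windowSigma E n] S)
    {x y : ℤ → E} (hxy : Set.EqOn x y (Set.Icc (-(n : ℤ)) n)) : x ∈ S ↔ y ∈ S := by
  obtain ⟨T, -, rfl⟩ := windowSigma_le_comap_domRestrict n S hS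
  simp only [Set.mem_preimage, Set.domRestrict_eq_domRestrict_iff.2 hxy]

theorem measure_ext_of_windowSigma {μ ν : Measure (ℤ → E)} [IsProbabilityMeasure μ]
    [IsProbabilityMeasure ν] (h : ∀ n S, MeasurableSet[windowSigma E n] S → μ S = ν S) :
    μ = ν := by
  refine ext_of_generate_finite {S | ∃ n, MeasurableSet[windowSigma E n] S} ?_ ?_
    (fun S ⟨n, hS⟩ => h n S hS) (by simp)
  · refine le_antisymm (iSup_le fun i => ?_)
      (MeasurableSpace.generateFrom_le fun S ⟨n, hS⟩ => windowSigma_le_pi n S hS)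
    refine (comap_eval_le_windowSigma (n := i.natAbs) ?_).trans fun S hS =>
      MeasurableSpace.measurableSet_generateFrom ⟨i.natAbs, hS⟩
    simp only [Finset.mem_Icc]; omega
  · rintro S ⟨n, hS⟩ T ⟨m, hT⟩ -
    exact ⟨max n m, (windowSigma_mono (le_max_left n m) _ hS).inter
      (windowSigma_mono (le_max_right n m) _ hT)⟩

end Window

def DeterminedByWindow {E D : Type*} [MeasurableSpace E] [MeasurableSpace D]
    (φ : (ℤ → E) → D) (τ : (ℤ → E) → ℕ∞) : Prop :=
  ∀ s, MeasurableSet s → ∀ n : ℕ, MeasurableSet[windowSigma E n] ({x | φ x ∈ s} ∩ {x | τ x ≤ n})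

theorem DeterminedByWindow.mem_of_eqOn {E D : Type*} [MeasurableSpace E] [MeasurableSpace D]
    {φ : (ℤ → E) → D} {τ : (ℤ → E) → ℕ∞} (h : DeterminedByWindow φ τ) {s : Set D}
    (hs : MeasurableSet s) {n : ℕ} {x y : ℤ → E} (hτ : τ x ≤ n)
    (hxy : Set.EqOn x y (Set.Icc (-(n : ℤ)) n)) (hx : φ x ∈ s) : φ y ∈ s :=
  ((mem_iff_of_eqOn_window (h s hs n) hxy).1 ⟨hx, hτ⟩).1

section Search

variable {E C : Type*}

/-- Enumerating (time, index) pairs along `Nat.unpair` keeps the search for a decided code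
stop-finitary, since `k.unpair.1 ≤ k`. -/
def SearchHit (πs : ℕ → (ℤ → E) → ℤ → Option C) (τs : ℕ → (ℤ → E) → ℕ∞) (x : ℤ → E)
    (k : ℕ) : Prop :=
  πs k.unpair.2 x 0 ≠ none ∧ τs k.unpair.2 x ≤ k.unpair.1

open Classical in
def searchTime (πs : ℕ → (ℤ → E) → ℤ → Option C) (τs : ℕ → (ℤ → E) → ℕ∞) (x : ℤ → E) : ℕ∞ :=
  if h : ∃ k, SearchHit πs τs x k then (Nat.find h : ℕ∞) else ⊤

open Classical in
def limitValue (πs : ℕ → (ℤ → E) → ℤ → Option C) (τs : ℕ → (ℤ → E) → ℕ∞) (x : ℤ → E) :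
    Option C :=
  if h : ∃ k, SearchHit πs τs x k then πs (Nat.find h).unpair.2 x 0 else none

variable {πs : ℕ → (ℤ → E) → ℤ → Option C} {τs : ℕ → (ℤ → E) → ℕ∞}

theorem searchTime_le_iff {x : ℤ → E} {n : ℕ} :
    searchTime πs τs x ≤ n ↔ ∃ k ≤ n, SearchHit πs τs x k := by
  classical
  unfold searchTime
  split_ifs with h
  · rw [Nat.cast_le, Nat.find_le_iff]
  · simp only [top_le_iff, ENat.natCast_ne_top, false_iff]
    exact fun ⟨k, _, hk⟩ => h ⟨k, hk⟩

theorem searchTime_eq_top_iff {x : ℤ → E} :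
    searchTime πs τs x = ⊤ ↔ ∀ i, πs i x 0 = none ∨ τs i x = ⊤ := by
  classical
  unfold searchTime
  split_ifs with h
  · simp only [ENat.natCast_ne_top, false_iff, not_forall, not_or]
    obtain ⟨k, hk, hτ⟩ := h
    exact ⟨k.unpair.2, hk, ne_top_of_le_ne_top (ENat.natCast_ne_top _) hτ⟩
  · simp only [true_iff]
    intro i
    by_contra! hi
    exact h ⟨Nat.pair (τs i x).toNat i,
      by simpa [SearchHit] using ⟨hi.1, (ENat.natCast_toNat_eq_self.2 hi.2).ge⟩⟩

theorem exists_searchTime_le_of_limitValue_ne_none {x : ℤ → E} (hx : limitValue πs τs x ≠ none) :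
    ∃ n : ℕ, searchTime πs τs x ≤ n := by
  classical
  unfold limitValue at hx
  split_ifs at hx with h
  · exact ⟨Nat.find h, by simp [searchTime, h]⟩
  · exact absurd rfl hx

theorem setOf_limitValue_mem_inter_searchTime_le (s : Set (Option C)) (n : ℕ) :
    {x | limitValue πs τs x ∈ s} ∩ {x | searchTime πs τs x ≤ n} =
      ⋃ k ≤ n, ({x | SearchHit πs τs x k ∧ πs k.unpair.2 x 0 ∈ s} ∩
        ⋂ j < k, {x | SearchHit πs τs x j}ᶜ) := by
  classical
  ext x
  simp only [Set.mem_inter_iff, Set.mem_ofPred_eq, searchTime_le_iff, Set.mem_iUnion,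
    Set.mem_iInter, Set.mem_compl_iff]
  constructor
  · rintro ⟨hs, k, hkn, hk⟩
    have h : ∃ k, SearchHit πs τs x k := ⟨k, hk⟩
    rw [limitValue, dif_pos h] at hs
    exact ⟨Nat.find h, (Nat.find_min' h hk).trans hkn, ⟨Nat.find_spec h, hs⟩,
      fun j hj => Nat.find_min h hj⟩
  · rintro ⟨k, hkn, ⟨hk, hs⟩, hmin⟩
    have h : ∃ k, SearchHit πs τs x k := ⟨k, hk⟩
    rw [limitValue, dif_pos h, (Nat.find_eq_iff h).2 ⟨hk, hmin⟩]
    exact ⟨hs, k, hkn, hk⟩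

variable [MeasurableSpace E]

theorem measurableSet_searchHit_and
    (hw : ∀ i, DeterminedByWindow (fun x => πs i x 0) (τs i))
    (k : ℕ) (s : Set (Option C)) :
    MeasurableSet[windowSigma E k] {x | SearchHit πs τs x k ∧ πs k.unpair.2 x 0 ∈ s} := by
  have hset : {x | SearchHit πs τs x k ∧ πs k.unpair.2 x 0 ∈ s} =
      {x | πs k.unpair.2 x 0 ∈ s \ {none}} ∩ {x | τs k.unpair.2 x ≤ k.unpair.1} := by
    ext x
    simp only [SearchHit, ne_eq, Set.mem_ofPred_eq, Set.mem_sdiff, Set.mem_singleton_iff,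
      Set.mem_inter_iff]
    tauto
  rw [hset]
  exact windowSigma_mono (Nat.unpair_left_le k) _ (hw _ _ .of_discrete _)

theorem measurableSet_limitValue_mem_inter_searchTime_le
    (hw : ∀ i, DeterminedByWindow (fun x => πs i x 0) (τs i))
    (s : Set (Option C)) (n : ℕ) :
    MeasurableSet[windowSigma E n]
      ({x | limitValue πs τs x ∈ s} ∩ {x | searchTime πs τs x ≤ n}) := by
  have hit : ∀ k ≤ n, MeasurableSet[windowSigma E n] {x | SearchHit πs τs x k} := fun k hk =>
    windowSigma_mono hk _ (by simpa using measurableSet_searchHit_and hw k Set.univ)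
  rw [setOf_limitValue_mem_inter_searchTime_le]
  exact .biUnion (Set.to_countable _) fun k hk =>
    (windowSigma_mono hk _ (measurableSet_searchHit_and hw k s)).inter
      (.biInter (Set.to_countable _) fun j hj => (hit j ((Nat.le_of_lt hj).trans hk)).compl)

theorem measurableSet_searchTime_le
    (hw : ∀ i, DeterminedByWindow (fun x => πs i x 0) (τs i)) (n : ℕ) :
    MeasurableSet[windowSigma E n] {x | searchTime πs τs x ≤ n} := by
  simpa using measurableSet_limitValue_mem_inter_searchTime_le hw Set.univ n

theorem measurable_limitValue [Countable C]
    (hw : ∀ i, DeterminedByWindow (fun x => πs i x 0) (τs i)) :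
    Measurable (limitValue πs τs) := by
  have hsome : ∀ a : C, MeasurableSet {x | limitValue πs τs x = some a} := by
    intro a
    have hset : {x | limitValue πs τs x = some a} =
        ⋃ n : ℕ, {x | limitValue πs τs x ∈ ({some a} : Set (Option C))} ∩
          {x | searchTime πs τs x ≤ n} := by
      ext x
      simp only [Set.mem_ofPred_eq, Set.mem_iUnion, Set.mem_inter_iff, Set.mem_singleton_iff]
      exact ⟨fun h => (exists_searchTime_le_of_limitValue_ne_none (by simp [h])).imp
        fun _ hn => ⟨h, hn⟩, fun ⟨_, h, _⟩ => h⟩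
    rw [hset]
    exact .iUnion fun n => windowSigma_le_pi n _
      (measurableSet_limitValue_mem_inter_searchTime_le hw _ n)
  refine measurable_to_countable' fun o => ?_
  cases o with
  | some a => exact hsome a
  | none =>
    have hset : limitValue πs τs ⁻¹' {none} = (⋃ a, {x | limitValue πs τs x = some a})ᶜ := by
      ext x; simp [Option.eq_none_iff_forall_ne_some]
    rw [hset]
    exact (MeasurableSet.iUnion hsome).compl

end Search

theorem eq_some_of_extends {C : Type*} {f : ℕ → Option C} (hf : ∀ i, f i ≠ none → f (i + 1) = f i)
    {i j : ℕ} (hij : i ≤ j) {a : C} (h : f i = some a) : f j = some a := by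
  induction j, hij using Nat.le_induction with
  | base => exact h
  | succ j _ ih => rw [hf j (by simp [ih]), ih]

theorem eq_of_extends {C : Type*} {f : ℕ → Option C} (hf : ∀ i, f i ≠ none → f (i + 1) = f i)
    {i j : ℕ} {a b : C} (ha : f i = some a) (hb : f j = some b) : a = b := by
  rcases le_total i j with hij | hji
  · exact Option.some_injective _ ((eq_some_of_extends hf hij ha).symm.trans hb)
  · exact Option.some_injective _ (ha.symm.trans (eq_some_of_extends hf hji hb))

theorem limitValue_eq_some {E C : Type*} {πs : ℕ → (ℤ → E) → ℤ → Option C}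
    {τs : ℕ → (ℤ → E) → ℕ∞} {x : ℤ → E} (hτ : ∀ i, τs i x ≠ ⊤)
    (hext : ∀ i, πs i x 0 ≠ none → πs (i + 1) x 0 = πs i x 0) {i : ℕ} {a : C}
    (h : πs i x 0 = some a) : limitValue πs τs x = some a := by
  classical
  have hhit : ∃ k, SearchHit πs τs x k := ⟨Nat.pair (τs i x).toNat i,
    by simpa [SearchHit, h] using (ENat.natCast_toNat_eq_self.2 (hτ i)).ge⟩
  rw [limitValue, dif_pos hhit]
  obtain ⟨b, hb⟩ := Option.ne_none_iff_exists'.1 (Nat.find_spec hhit).1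
  rw [hb, eq_of_extends (f := fun j => πs j x 0) hext hb h]

section LimitCode

variable {A B C : Type*}

/-- `c₀` is a junk letter for the coordinates that no code in `πs` decides. -/
def limitCode (c₀ : C) (πs : ℕ → (ℤ → A × B) → ℤ → Option C) (τs : ℕ → (ℤ → A × B) → ℕ∞) :
    (ℤ → A × B) → ℤ → C × B :=
  slide fun x => ((limitValue πs τs x).getD c₀, (x 0).2)

variable {c₀ : C} {πs : ℕ → (ℤ → A × B) → ℤ → Option C} {τs : ℕ → (ℤ → A × B) → ℕ∞}

theorem limitCode_apply (x : ℤ → A × B) (n : ℤ) :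
    limitCode c₀ πs τs x n = ((limitValue πs τs (shiftBy n x)).getD c₀, (x n).2) := by
  simp [limitCode]

@[simp]
theorem limitCode_apply_snd (x : ℤ → A × B) (n : ℤ) : (limitCode c₀ πs τs x n).2 = (x n).2 := by
  simp [limitCode_apply]

theorem limitCode_shiftBy (k : ℤ) (x : ℤ → A × B) :
    limitCode c₀ πs τs (shiftBy k x) = shiftBy k (limitCode c₀ πs τs x) :=
  slide_shiftBy _ k x

variable [MeasurableSpace A] [MeasurableSpace B] [MeasurableSpace C] [Countable C]

theorem measurable_limitCode (hw : ∀ i, DeterminedByWindow (fun x => πs i x 0) (τs i)) :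
    Measurable (limitCode c₀ πs τs) :=
  measurable_slide (((Measurable.of_discrete (f := fun o : Option C => o.getD c₀)).comp
    (measurable_limitValue hw)).prodMk (measurable_pi_apply 0).snd)

theorem determinedByWindow_limitCode (hw : ∀ i, DeterminedByWindow (fun x => πs i x 0) (τs i)) :
    DeterminedByWindow (fun x => limitCode c₀ πs τs x 0) (searchTime πs τs) := by
  intro s hs n
  have hset : {x | limitCode c₀ πs τs x 0 ∈ s} ∩ {x | searchTime πs τs x ≤ n} =
      ⋃ o : Option C, ({x | limitValue πs τs x ∈ ({o} : Set (Option C))} ∩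
        {x | searchTime πs τs x ≤ n}) ∩
        (fun x : ℤ → A × B => x 0) ⁻¹' {p | (o.getD c₀, p.2) ∈ s} := by
    ext x; simp [limitCode_apply, and_comm]
  rw [hset]
  exact .iUnion fun o => (measurableSet_limitValue_mem_inter_searchTime_le hw _ n).inter
    (measurableSet_windowSigma_eval_zero_preimage n (measurable_const.prodMk measurable_snd hs))

theorem stopFinitary_limitCode (hw : ∀ i, DeterminedByWindow (fun x => πs i x 0) (τs i))
    {μ : Measure (ℤ → A × B)} (hμ : μ {x | searchTime πs τs x = ⊤} = 0) :
    StopFinitary μ (limitCode c₀ πs τs) :=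
  ⟨searchTime πs τs, measurableSet_searchTime_le hw, hμ, determinedByWindow_limitCode hw⟩

end LimitCode

structure IsExhaustingCodes {E C : Type*} [MeasurableSpace E] (μ : Measure (ℤ → E))
    (πs : ℕ → (ℤ → E) → ℤ → Option C) (τs : ℕ → (ℤ → E) → ℕ∞) : Prop where
  measurePreserving : MeasurePreserving zshift μ μ
  measurable : ∀ i, Measurable (πs i)
  ae_zshift : ∀ i, ∀ᵐ x ∂μ, πs i (zshift x) = zshift (πs i x)
  determinedByWindow : ∀ i, DeterminedByWindow (fun x => πs i x 0) (τs i)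
  ae_ne_top : ∀ i, ∀ᵐ x ∂μ, τs i x ≠ ⊤
  ae_extends : ∀ i, ∀ᵐ x ∂μ, ∀ n, πs i x n ≠ none → πs (i + 1) x n = πs i x n
  tendsto_uncertainty : Tendsto (fun i => μ {x | πs i x 0 = none}) atTop (𝓝 0)

theorem exists_isExhaustingCodes {E C : Type*} [MeasurableSpace E] {μ : Measure (ℤ → E)}
    {πs : ℕ → (ℤ → E) → ℤ → Option C} (hμ : MeasurePreserving zshift μ μ)
    (hm : ∀ i, Measurable (πs i)) (hzshift : ∀ i, ∀ᵐ x ∂μ, πs i (zshift x) = zshift (πs i x))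
    (hfin : ∀ i, StopFinitary μ (πs i))
    (hext : ∀ i, ∀ᵐ x ∂μ, ∀ n, πs i x n ≠ none → πs (i + 1) x n = πs i x n)
    (hunc : Tendsto (fun i => μ {x | πs i x 0 = none}) atTop (𝓝 0)) :
    ∃ τs, IsExhaustingCodes μ πs τs := by
  choose τs _ hnull hw using hfin
  exact ⟨τs, hμ, hm, hzshift, hw, fun i => measure_eq_zero_iff_ae_notMem.1 (hnull i), hext, hunc⟩

namespace IsExhaustingCodes

variable {A B C : Type*} [MeasurableSpace A] [MeasurableSpace B]
  {μ : Measure (ℤ → A × B)} {πs : ℕ → (ℤ → A × B) → ℤ → Option C} {τs : ℕ → (ℤ → A × B) → ℕ∞}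

theorem ae_searchTime_ne_top (h : IsExhaustingCodes μ πs τs) :
    ∀ᵐ x ∂μ, searchTime πs τs x ≠ ⊤ := by
  have hnone : μ (⋂ i, {x | πs i x 0 = none}) = 0 :=
    le_zero_iff.1 (ge_of_tendsto' h.tendsto_uncertainty fun i =>
      measure_mono (Set.iInter_subset _ i))
  filter_upwards [ae_all_iff.2 h.ae_ne_top, measure_eq_zero_iff_ae_notMem.1 hnone]
    with x hτ hx htop
  exact hx (Set.mem_iInter.2 fun i => (searchTime_eq_top_iff.1 htop i).resolve_right (hτ i))

theorem stopFinitary_limitCode [MeasurableSpace C] [Countable C] (h : IsExhaustingCodes μ πs τs)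
    (c₀ : C) : StopFinitary μ (limitCode c₀ πs τs) :=
  ZP.stopFinitary_limitCode h.determinedByWindow
    (measure_eq_zero_iff_ae_notMem.2 (by simpa using h.ae_searchTime_ne_top))

theorem ae_limitCode_eq (h : IsExhaustingCodes μ πs τs) (c₀ : C) :
    ∀ᵐ x ∂μ, ∀ i n a, πs i x n = some a → limitCode c₀ πs τs x n = (a, (x n).2) := by
  have hgood : ∀ᵐ y ∂μ, ∀ j, τs j y ≠ ⊤ ∧ ∀ n, πs j y n ≠ none → πs (j + 1) y n = πs j y n :=
    ae_all_iff.2 fun j => (h.ae_ne_top j).and (h.ae_extends j)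
  filter_upwards [ae_forall_shiftBy h.measurePreserving hgood,
    ae_all_iff.2 fun i => ae_shiftBy_comm h.measurePreserving (h.ae_zshift i)]
    with x hx hcomm i n a hi
  have hcoord : ∀ j, πs j (shiftBy n x) 0 = πs j x n := fun j => by simp [hcomm j n]
  rw [limitCode_apply, limitValue_eq_some (fun j => (hx n j).1) (fun j => (hx n j).2 0)
    (i := i) (by rw [hcoord, hi])]
  rfl

theorem measure_limitCode_ne_le (h : IsExhaustingCodes μ πs τs) (c₀ : C) {Ω : Type*}
    [MeasurableSpace Ω] {ρ : Measure Ω} {f : Ω → ℤ → A × B} {g : Ω → ℤ → C × B}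
    (hf : Measurable f) (hρ : ρ.map f = μ) (hsnd : ∀ ω n, (f ω n).2 = (g ω n).2) {i : ℕ}
    (hagree : ∀ᵐ ω ∂ρ, ∀ n a, πs i (f ω) n = some a → (g ω n).1 = a) (k : ℤ) :
    ρ {ω | limitCode c₀ πs τs (f ω) k ≠ g ω k} ≤ μ {x | πs i x 0 = none} := by
  have hlim : ∀ᵐ ω ∂ρ, ∀ j n a, πs j (f ω) n = some a →
      limitCode c₀ πs τs (f ω) n = (a, (f ω n).2) :=
    ae_of_ae_map hf.aemeasurable (by rw [hρ]; exact h.ae_limitCode_eq c₀)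
  have hk : MeasurableSet {x | πs i x k = none} :=
    (measurable_pi_apply k).comp (h.measurable i) (measurableSet_singleton none)
  calc ρ {ω | limitCode c₀ πs τs (f ω) k ≠ g ω k} ≤ ρ (f ⁻¹' {x | πs i x k = none}) := by
        refine measure_mono_ae ?_
        filter_upwards [hlim, hagree] with ω hlim hagree hne
        by_contra hk
        obtain ⟨a, ha⟩ := Option.ne_none_iff_exists'.1 hk
        exact hne (by rw [hlim i k a ha, hsnd, ← hagree k a ha])
    _ = μ {x | πs i x k = none} := by rw [← hρ, Measure.map_apply hf hk]
    _ = μ {x | πs i x 0 = none} :=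
        measure_apply_mem_eq h.measurePreserving (h.measurable i) (h.ae_zshift i)
          (measurableSet_singleton none) k

end IsExhaustingCodes

theorem le_of_forall_le_add_of_tendsto_zero {a b : ℝ≥0∞} {c : ℕ → ℝ≥0∞}
    (h : ∀ i, a ≤ b + c i) (hc : Tendsto c atTop (𝓝 0)) : a ≤ b :=
  ge_of_tendsto (by simpa using tendsto_const_nhds.add hc) (Eventually.of_forall h)

theorem tendsto_measure_compl_setOf_le_nat {X : Type*} [MeasurableSpace X] {ν : Measure X}
    [IsFiniteMeasure ν] {τ : X → ℕ∞} (hτ : ∀ n : ℕ, MeasurableSet {y | τ y ≤ n})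
    (htop : ν {y | τ y = ⊤} = 0) : Tendsto (fun n : ℕ => ν {y | τ y ≤ n}ᶜ) atTop (𝓝 0) := by
  have hanti : Antitone fun n : ℕ => {y | τ y ≤ n}ᶜ := fun n m hnm =>
    Set.compl_subset_compl.2 fun y (hy : τ y ≤ n) =>
      show τ y ≤ m from hy.trans (by exact_mod_cast hnm)
  have hI : ⋂ n : ℕ, {y | τ y ≤ n}ᶜ = {y | τ y = ⊤} := by
    ext y; simp [ENat.eq_top_iff_forall_gt]
  simpa [Function.comp_def, hI, htop] using tendsto_measure_iInter_atTop
    (fun n => (hτ n).compl.nullMeasurableSet) hanti ⟨0, measure_ne_top ν _⟩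

theorem tendsto_measure_not_eqOn_Icc {Ω D : Type*} [MeasurableSpace Ω] {ρ : ℕ → Measure Ω}
    {F G : Ω → ℤ → D} {u : ℕ → ℝ≥0∞} (hu : Tendsto u atTop (𝓝 0))
    (hne : ∀ i k, ρ i {ω | F ω k ≠ G ω k} ≤ u i) (n : ℕ) :
    Tendsto (fun i => ρ i {ω | ¬ Set.EqOn (F ω) (G ω) (Set.Icc (-(n : ℤ)) n)}) atTop (𝓝 0) := by
  set I := Finset.Icc (-(n : ℤ)) n
  have hle : ∀ i, ρ i {ω | ¬ Set.EqOn (F ω) (G ω) (Set.Icc (-(n : ℤ)) n)} ≤ I.card * u i := by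
    intro i
    calc ρ i {ω | ¬ Set.EqOn (F ω) (G ω) (Set.Icc (-(n : ℤ)) n)}
        ≤ ρ i (⋃ k ∈ I, {ω | F ω k ≠ G ω k}) :=
          measure_mono fun ω hω => by simpa [I, Set.EqOn, and_assoc] using hω
      _ ≤ ∑ k ∈ I, ρ i {ω | F ω k ≠ G ω k} := measure_biUnion_finset_le _ _
      _ ≤ ∑ _k ∈ I, u i := Finset.sum_le_sum fun k _ => hne i k
      _ = I.card * u i := by rw [Finset.sum_const, nsmul_eq_mul]
  refine tendsto_of_tendsto_of_tendsto_of_le_of_le tendsto_const_nhds ?_ (fun _ => zero_le) hle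
  simpa using ENNReal.Tendsto.const_mul hu (Or.inr (ENNReal.natCast_ne_top I.card))

section Coupling

variable {Ω : Type*} [MeasurableSpace Ω] {ρ : ℕ → Measure Ω}

theorem map_eq_of_measure_ne_le {E F : Type*} [MeasurableSpace E] [MeasurableSpace F]
    {μ : Measure (ℤ → E)} {ν : Measure (ℤ → F)} [IsProbabilityMeasure μ] [IsProbabilityMeasure ν]
    {f : Ω → ℤ → E} {g : Ω → ℤ → F} (hf : Measurable f) (hg : Measurable g)
    (hρf : ∀ i, (ρ i).map f = μ) (hρg : ∀ i, (ρ i).map g = ν)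
    {Φ : (ℤ → E) → ℤ → F} (hΦ : Measurable Φ) {u : ℕ → ℝ≥0∞} (hu : Tendsto u atTop (𝓝 0))
    (hne : ∀ i k, ρ i {ω | Φ (f ω) k ≠ g ω k} ≤ u i) :
    μ.map Φ = ν := by
  have : IsProbabilityMeasure (μ.map Φ) := Measure.isProbabilityMeasure_map hΦ.aemeasurable
  refine measure_ext_of_windowSigma fun n S hS => ?_
  have hSm := windowSigma_le_pi n S hS
  set bad := {ω | ¬ Set.EqOn (Φ (f ω)) (g ω) (Set.Icc (-(n : ℤ)) n)}
  have hbad := tendsto_measure_not_eqOn_Icc hu hne n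
  have hμ : ∀ i, μ.map Φ S = ρ i (f ⁻¹' (Φ ⁻¹' S)) := fun i => by
    rw [← hρf i, Measure.map_map hΦ hf, Measure.map_apply (hΦ.comp hf) hSm]; rfl
  have hν : ∀ i, ν S = ρ i (g ⁻¹' S) := fun i => by rw [← hρg i, Measure.map_apply hg hSm]
  have hmem : ∀ ω ∉ bad, Φ (f ω) ∈ S ↔ g ω ∈ S := fun ω hω =>
    mem_iff_of_eqOn_window hS (not_not.1 hω)
  have hle : ∀ i {P Q : Set Ω}, (∀ ω ∉ bad, ω ∈ P → ω ∈ Q) → ρ i P ≤ ρ i Q + ρ i bad :=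
    fun i P Q hPQ => (measure_mono fun ω hω => by
      by_cases hb : ω ∈ bad
      exacts [Or.inr hb, Or.inl (hPQ ω hb hω)]).trans (measure_union_le _ _)
  refine le_antisymm (le_of_forall_le_add_of_tendsto_zero (fun i => ?_) hbad)
    (le_of_forall_le_add_of_tendsto_zero (fun i => ?_) hbad)
  · rw [hμ i, hν i]; exact hle i fun ω hb => (hmem ω hb).1
  · rw [hμ i, hν i]; exact hle i fun ω hb => (hmem ω hb).2

theorem ae_apply_zero_eq_of_measure_ne_le {A A' B : Type*} [MeasurableSpace A] [Countable A]
    [MeasurableSingletonClass A] [MeasurableSpace A'] [MeasurableSpace B]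
    {μ : Measure (ℤ → A × B)} {ν : Measure (ℤ → A' × B)} [IsFiniteMeasure ν]
    {f : Ω → ℤ → A × B} {g : Ω → ℤ → A' × B} (hf : Measurable f) (hg : Measurable g)
    (hρf : ∀ i, (ρ i).map f = μ) (hρg : ∀ i, (ρ i).map g = ν)
    {Φ : (ℤ → A × B) → ℤ → A' × B} {Ψ : (ℤ → A' × B) → ℤ → A × B}
    (hΦ : Measurable Φ) (hΨ : Measurable Ψ) (hΨfin : StopFinitary ν Ψ)
    (hΦsnd : ∀ x n, (Φ x n).2 = (x n).2) (hΨsnd : ∀ y n, (Ψ y n).2 = (y n).2)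
    {u u' : ℕ → ℝ≥0∞} (hu : Tendsto u atTop (𝓝 0)) (hu' : Tendsto u' atTop (𝓝 0))
    (hΦne : ∀ i k, ρ i {ω | Φ (f ω) k ≠ g ω k} ≤ u i)
    (hΨne : ∀ i, ρ i {ω | Ψ (g ω) 0 ≠ f ω 0} ≤ u' i) :
    ∀ᵐ x ∂μ, Ψ (Φ x) 0 = x 0 := by
  obtain ⟨τ, hτ, hτtop, hΨw⟩ := hΨfin
  set E := {x | (Ψ (Φ x) 0).1 ≠ (x 0).1}
  have hE : MeasurableSet E := (measurableSet_eq_fun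
    ((measurable_pi_apply 0).comp (hΨ.comp hΦ)).fst (measurable_pi_apply 0).fst).compl
  have hbound : ∀ (n : ℕ) i, μ E ≤ ν {y | τ y ≤ n}ᶜ +
      (ρ i {ω | ¬ Set.EqOn (Φ (f ω)) (g ω) (Set.Icc (-(n : ℤ)) n)} + u' i) := by
    intro n i
    rw [← hρf i, Measure.map_apply hf hE, ← hρg i,
      Measure.map_apply hg (windowSigma_le_pi n _ (hτ n)).compl]
    refine (measure_mono fun ω hω => ?_).trans ((measure_union_le _ _).trans
      (add_le_add le_rfl ((measure_union_le _ _).trans (add_le_add le_rfl (hΨne i)))))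
    by_contra hgood
    simp only [Set.mem_union, Set.mem_preimage, Set.mem_compl_iff, Set.mem_ofPred_eq, not_or,
      not_not] at hgood
    obtain ⟨hτn, hwin, h0⟩ := hgood
    exact hω (DeterminedByWindow.mem_of_eqOn hΨw
      ((measurableSet_singleton (f ω 0).1).preimage measurable_fst) hτn hwin.symm (by simp [h0]))
  have hE0 : μ E = 0 := le_zero_iff.1 <| ge_of_tendsto
    (tendsto_measure_compl_setOf_le_nat (fun n => windowSigma_le_pi n _ (hτ n)) hτtop)
    (Eventually.of_forall fun n => le_of_forall_le_add_of_tendsto_zero (hbound n)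
      (by simpa using (tendsto_measure_not_eqOn_Icc hu hΦne n).add hu'))
  filter_upwards [measure_eq_zero_iff_ae_notMem.1 hE0] with x hx
  exact Prod.ext (not_not.1 hx) (by rw [hΨsnd, hΦsnd])

end Coupling

namespace IsExhaustingCodes

variable {A A' B : Type*} [MeasurableSpace A] [MeasurableSpace A'] [Countable A']
  [MeasurableSpace B] {μ : Measure (ℤ → A × B)} {ν : Measure (ℤ → A' × B)}
  {πs : ℕ → (ℤ → A × B) → ℤ → Option A'} {τs : ℕ → (ℤ → A × B) → ℕ∞}
  {Ω : Type*} [MeasurableSpace Ω] {ρ : ℕ → Measure Ω} {f : Ω → ℤ → A × B} {g : Ω → ℤ → A' × B}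

theorem finitaryFactorMap_limitCode [IsProbabilityMeasure μ] [IsProbabilityMeasure ν]
    (h : IsExhaustingCodes μ πs τs) (c₀ : A') (hf : Measurable f) (hg : Measurable g)
    (hρf : ∀ i, (ρ i).map f = μ) (hρg : ∀ i, (ρ i).map g = ν)
    (hsnd : ∀ ω n, (f ω n).2 = (g ω n).2)
    (hagree : ∀ i, ∀ᵐ ω ∂ρ i, ∀ n a, πs i (f ω) n = some a → (g ω n).1 = a) :
    FinitaryFactorMap μ ν (limitCode c₀ πs τs) :=
  ⟨⟨measurable_limitCode h.determinedByWindow, ae_of_all _ (limitCode_shiftBy 1),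
    map_eq_of_measure_ne_le hf hg hρf hρg (measurable_limitCode h.determinedByWindow)
      h.tendsto_uncertainty fun i => h.measure_limitCode_ne_le c₀ hf (hρf i) hsnd (hagree i)⟩,
    h.stopFinitary_limitCode c₀⟩

theorem ae_limitCode_limitCode [Countable A] [MeasurableSingletonClass A] [IsFiniteMeasure ν]
    {πs' : ℕ → (ℤ → A' × B) → ℤ → Option A} {τs' : ℕ → (ℤ → A' × B) → ℕ∞}
    (h : IsExhaustingCodes μ πs τs) (h' : IsExhaustingCodes ν πs' τs') (c₀ : A') (c₀' : A)
    (hf : Measurable f) (hg : Measurable g)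
    (hρf : ∀ i, (ρ i).map f = μ) (hρg : ∀ i, (ρ i).map g = ν)
    (hsnd : ∀ ω n, (f ω n).2 = (g ω n).2)
    (hagree : ∀ i, ∀ᵐ ω ∂ρ i, ∀ n a, πs i (f ω) n = some a → (g ω n).1 = a)
    (hagree' : ∀ i, ∀ᵐ ω ∂ρ i, ∀ n a, πs' i (g ω) n = some a → (f ω n).1 = a) :
    ∀ᵐ x ∂μ, limitCode c₀' πs' τs' (limitCode c₀ πs τs x) = x :=
  ae_eq_of_ae_apply_zero_eq h.measurePreserving (fun k x => by simp only [limitCode_shiftBy]) <|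
    ae_apply_zero_eq_of_measure_ne_le hf hg hρf hρg (measurable_limitCode h.determinedByWindow)
      (measurable_limitCode h'.determinedByWindow) (h'.stopFinitary_limitCode c₀')
      limitCode_apply_snd limitCode_apply_snd h.tendsto_uncertainty h'.tendsto_uncertainty
      (fun i => h.measure_limitCode_ne_le c₀ hf (hρf i) hsnd (hagree i))
      (fun i => h'.measure_limitCode_ne_le c₀' hg (hρg i) (fun ω n => (hsnd ω n).symm)
        (hagree' i) 0)

end IsExhaustingCodes

def joinFst {A A' B : Type*} (ω : ℤ → (A × A') × B) : ℤ → A × B := fun i => ((ω i).1.1, (ω i).2)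

def joinSnd {A A' B : Type*} (ω : ℤ → (A × A') × B) : ℤ → A' × B := fun i => ((ω i).1.2, (ω i).2)

theorem measurable_joinFst {A A' B : Type*} [MeasurableSpace A] [MeasurableSpace A']
    [MeasurableSpace B] : Measurable (joinFst (A := A) (A' := A') (B := B)) :=
  measurable_pi_lambda _ fun i => (measurable_pi_apply i).fst.fst.prodMk (measurable_pi_apply i).snd

theorem measurable_joinSnd {A A' B : Type*} [MeasurableSpace A] [MeasurableSpace A']
    [MeasurableSpace B] : Measurable (joinSnd (A := A) (A' := A') (B := B)) :=
  measurable_pi_lambda _ fun i => (measurable_pi_apply i).fst.snd.prodMk (measurable_pi_apply i).snd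

theorem relatively_finitarily_isomorphic_of_partial_isomorphisms_general
    {A A' B : Type}
    [Countable A] [MeasurableSpace A] [MeasurableSingletonClass A]
    [Countable A'] [MeasurableSpace A'] [MeasurableSingletonClass A']
    [MeasurableSpace B]
    (μ : Measure (ℤ → A × B)) (ν : Measure (ℤ → A' × B))
    [IsProbabilityMeasure μ] [IsProbabilityMeasure ν]
    (hμerg : Ergodic (zshift (A := A × B)) μ) (hνerg : Ergodic (zshift (A := A' × B)) ν)
    (π : ℕ → ((ℤ → A × B) → ℤ → Option A')) (π' : ℕ → ((ℤ → A' × B) → ℤ → Option A))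
    (hpi : ∀ i : ℕ, PartialIso μ ν (π i) (π' i))
    (hfin : ∀ i : ℕ, StopFinitary μ (π i) ∧ StopFinitary ν (π' i))
    (hext : ∀ i : ℕ,
      (∀ᵐ ω ∂μ, ∀ n : ℤ, π i ω n ≠ none → π (i + 1) ω n = π i ω n) ∧
      (∀ᵐ ω ∂ν, ∀ n : ℤ, π' i ω n ≠ none → π' (i + 1) ω n = π' i ω n))
    (hunc : Tendsto (fun i => μ {ω | π i ω 0 = none}) atTop (nhds 0) ∧
            Tendsto (fun i => ν {ω | π' i ω 0 = none}) atTop (nhds 0)) :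
    RelFinitaryIso μ ν := by
  obtain ⟨x₀⟩ := nonempty_of_isProbabilityMeasure μ
  obtain ⟨y₀⟩ := nonempty_of_isProbabilityMeasure ν
  choose hπm hπ'm hπe hπ'e ρ _ hρμ hρν hagree hagree' using hpi
  obtain ⟨τ, hτ⟩ := exists_isExhaustingCodes hμerg.toMeasurePreserving hπm hπe
    (fun i => (hfin i).1) (fun i => (hext i).1) hunc.1
  obtain ⟨τ', hτ'⟩ := exists_isExhaustingCodes hνerg.toMeasurePreserving hπ'm hπ'e
    (fun i => (hfin i).2) (fun i => (hext i).2) hunc.2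
  have hsnd : ∀ (ω : ℤ → (A × A') × B) n, (joinFst ω n).2 = (joinSnd ω n).2 := fun _ _ => rfl
  refine ⟨limitCode (y₀ 0).1 π τ, limitCode (x₀ 0).1 π' τ',
    hτ.finitaryFactorMap_limitCode _ measurable_joinFst measurable_joinSnd hρμ hρν hsnd hagree,
    hτ'.finitaryFactorMap_limitCode _ measurable_joinSnd measurable_joinFst hρν hρμ
      (fun ω n => (hsnd ω n).symm) hagree', ?_, ?_⟩
  · filter_upwards [hτ.ae_limitCode_limitCode hτ' _ _ measurable_joinFst measurable_joinSnd
      hρμ hρν hsnd hagree hagree'] with x hx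
    exact ⟨funext fun n => limitCode_apply_snd x n, hx⟩
  · filter_upwards [hτ'.ae_limitCode_limitCode hτ _ _ measurable_joinSnd measurable_joinFst
      hρν hρμ (fun ω n => (hsnd ω n).symm) hagree' hagree] with y hy
    exact ⟨funext fun n => limitCode_apply_snd y n, hy⟩

/-- An extending sequence of finitary partial isomorphisms relative to `W`
with vanishing uncertainties yields a finitary isomorphism relative to `W`. -/
theorem relatively_finitarily_isomorphic_of_partial_isomorphisms
    {A A' B : Type}
    [Countable A] [MeasurableSpace A] [MeasurableSingletonClass A]
    [Countable A'] [MeasurableSpace A'] [MeasurableSingletonClass A']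
    [MeasurableSpace B] [StandardBorelSpace B]
    (μ : Measure (ℤ → A × B)) (ν : Measure (ℤ → A' × B))
    [IsProbabilityMeasure μ] [IsProbabilityMeasure ν]
    (hμerg : Ergodic (zshift (A := A × B)) μ) (hνerg : Ergodic (zshift (A := A' × B)) ν)
    (hW : μ.map seqSnd = ν.map seqSnd)
    (π : ℕ → ((ℤ → A × B) → ℤ → Option A')) (π' : ℕ → ((ℤ → A' × B) → ℤ → Option A))
    (hpi : ∀ i : ℕ, PartialIso μ ν (π i) (π' i))
    (hfin : ∀ i : ℕ, StopFinitary μ (π i) ∧ StopFinitary ν (π' i))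
    (hext : ∀ i : ℕ,
      (∀ᵐ ω ∂μ, ∀ n : ℤ, π i ω n ≠ none → π (i + 1) ω n = π i ω n) ∧
      (∀ᵐ ω ∂ν, ∀ n : ℤ, π' i ω n ≠ none → π' (i + 1) ω n = π' i ω n))
    (hunc : Tendsto (fun i => μ {ω | π i ω 0 = none}) atTop (nhds 0) ∧
            Tendsto (fun i => ν {ω | π' i ω 0 = none}) atTop (nhds 0)) :
    RelFinitaryIso μ ν :=
  relatively_finitarily_isomorphic_of_partial_isomorphisms_general μ ν hμerg hνerg π π' hpi hfin
    hext hunc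

end

end ZP
end
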